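/- Let {ε_t} be iid with mean 0 and variance 1, and let coefficients A_T(s₁,s₂) ∈ ℂ satisfy sup_{T,s} ∑_{s₁<s}(|A_T(s₁,s)| + |A_T(s,s₁)|) < ∞ and sup_{T,s}|A_T(s,s)| < ∞. Define M_T(s) = (ε_s² - 1)A_T(s,s) + ε_s ∑_{s₁=1}^{s-1} ε_{s₁}(A_T(s₁,s) + A_T(s,s₁)). Then {M_T(s)} is a martingale difference sequence with respect to F_s = σ(ε_s, ε_{s-1}, …), and if E ε_t⁸ < ∞ then sup_{s,T} E|M_T(s)|⁴ < ∞. -/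

import Mathlib

/-!
Write `M_T(s) = (ε_s² - 1) • a + ε_s • Z` with `a = A_T(s,s)` deterministic and
`Z = ∑_{s₁<s} ε_{s₁} (A_T(s₁,s) + A_T(s,s₁))` measurable for the past `F_{s-1}`. Since `ε_s` is
independent of the past, pulling `Z` out of the conditional expectation leaves `E[ε_s | F_{s-1}]`
and `E[ε_s² - 1 | F_{s-1}]`, which are the constants `E ε_s = 0` and `E ε_s² - 1 = 0`.

For the fourth moment, the triangle inequality and the power-mean inequality
`(∑ wᵢ xᵢ)⁴ ≤ (∑ wᵢ)³ ∑ wᵢ xᵢ⁴` (weights `wᵢ = ‖A_T(s₁,s) + A_T(s,s₁)‖`) bound `‖M_T(s)‖⁴`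
pointwise by a combination of `1`, `ε_s⁸` and `ε_{s₁}⁸` whose coefficients depend only on the
bounds for `A`; identical distribution makes all the eighth moments equal.
-/

open MeasureTheory

open Finset ProbabilityTheory

section Inequalities

variable {ι E : Type*} [NormedAddCommGroup E] [NormedSpace ℝ E]

lemma add_pow_four_le (x y : ℝ) : (x + y) ^ 4 ≤ 8 * (x ^ 4 + y ^ 4) := by
  nlinarith [sq_nonneg (x - y), sq_nonneg (x + y), sq_nonneg (x ^ 2 - y ^ 2), sq_nonneg (x * y)]

lemma sum_mul_pow_four_le (s : Finset ι) {w : ι → ℝ} (hw : ∀ i ∈ s, 0 ≤ w i) (x : ι → ℝ) :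
    (∑ i ∈ s, w i * x i) ^ 4 ≤ (∑ i ∈ s, w i) ^ 3 * ∑ i ∈ s, w i * x i ^ 4 := by
  have h₁ : (∑ i ∈ s, w i * x i) ^ 2 ≤ (∑ i ∈ s, w i) * ∑ i ∈ s, w i * x i ^ 2 :=
    sum_sq_le_sum_mul_sum_of_sq_le_mul s hw
      (fun i hi => mul_nonneg (hw i hi) (sq_nonneg _)) (fun i _ => le_of_eq (by ring))
  have h₂ : (∑ i ∈ s, w i * x i ^ 2) ^ 2 ≤ (∑ i ∈ s, w i) * ∑ i ∈ s, w i * x i ^ 4 :=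
    sum_sq_le_sum_mul_sum_of_sq_le_mul s hw
      (fun i hi => mul_nonneg (hw i hi) (by positivity)) (fun i _ => le_of_eq (by ring))
  calc (∑ i ∈ s, w i * x i) ^ 4 = ((∑ i ∈ s, w i * x i) ^ 2) ^ 2 := by ring
    _ ≤ ((∑ i ∈ s, w i) * ∑ i ∈ s, w i * x i ^ 2) ^ 2 := pow_le_pow_left₀ (sq_nonneg _) h₁ 2
    _ = (∑ i ∈ s, w i) ^ 2 * (∑ i ∈ s, w i * x i ^ 2) ^ 2 := by ring
    _ ≤ (∑ i ∈ s, w i) ^ 2 * ((∑ i ∈ s, w i) * ∑ i ∈ s, w i * x i ^ 4) := by gcongr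
    _ = (∑ i ∈ s, w i) ^ 3 * ∑ i ∈ s, w i * x i ^ 4 := by ring

lemma norm_quadratic_le (s : Finset ι) (a : E) (b : ι → E) (x : ℝ) (y : ι → ℝ) :
    ‖(x ^ 2 - 1) • a + x • ∑ i ∈ s, y i • b i‖ ≤
      ‖a‖ * |x ^ 2 - 1| + ∑ i ∈ s, ‖b i‖ * |x * y i| := by
  refine (norm_add_le _ _).trans (add_le_add ?_ ?_)
  · rw [norm_smul, Real.norm_eq_abs, mul_comm]
  · rw [smul_sum]
    refine (norm_sum_le _ _).trans_eq (sum_congr rfl fun i _ => ?_)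
    rw [smul_smul, norm_smul, Real.norm_eq_abs, mul_comm]

lemma norm_quadratic_pow_four_le (s : Finset ι) (a : E) (b : ι → E) (x : ℝ) (y : ι → ℝ) :
    ‖(x ^ 2 - 1) • a + x • ∑ i ∈ s, y i • b i‖ ^ 4 ≤
      64 * ‖a‖ ^ 4 * (x ^ 8 + 1) +
        8 * (∑ i ∈ s, ‖b i‖) ^ 3 * ∑ i ∈ s, ‖b i‖ * (x ^ 8 + y i ^ 8) := by
  have hdiag : (‖a‖ * |x ^ 2 - 1|) ^ 4 ≤ ‖a‖ ^ 4 * (8 * (x ^ 8 + 1)) := by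
    rw [mul_pow, (by decide : Even 4).pow_abs]
    gcongr
    linarith [add_pow_four_le (x ^ 2) (-1)]
  have hcross : ∀ i, |x * y i| ^ 4 ≤ x ^ 8 + y i ^ 8 := fun i => by
    rw [(by decide : Even 4).pow_abs]
    nlinarith [sq_nonneg (x ^ 4 - y i ^ 4), sq_nonneg (x ^ 4 + y i ^ 4)]
  have hoff := sum_mul_pow_four_le s (fun i _ => norm_nonneg (b i)) fun i => |x * y i|
  calc ‖(x ^ 2 - 1) • a + x • ∑ i ∈ s, y i • b i‖ ^ 4
      ≤ (‖a‖ * |x ^ 2 - 1| + ∑ i ∈ s, ‖b i‖ * |x * y i|) ^ 4 := by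
        gcongr; exact norm_quadratic_le s a b x y
    _ ≤ 8 * ((‖a‖ * |x ^ 2 - 1|) ^ 4 + (∑ i ∈ s, ‖b i‖ * |x * y i|) ^ 4) := add_pow_four_le _ _
    _ ≤ 8 * (‖a‖ ^ 4 * (8 * (x ^ 8 + 1)) +
          (∑ i ∈ s, ‖b i‖) ^ 3 * ∑ i ∈ s, ‖b i‖ * (x ^ 8 + y i ^ 8)) := by
        gcongr
        refine hoff.trans ?_
        gcongr with i
        exact hcross i
    _ = _ := by ring

end Inequalities

section Probability

variable {Ω ι E : Type*} [NormedAddCommGroup E] [NormedSpace ℝ E]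

lemma memLp_of_integrable_pow_of_even {mΩ : MeasurableSpace Ω} {μ : Measure Ω} {f : Ω → ℝ}
    (hf : AEStronglyMeasurable f μ) {n : ℕ} (hn : Even n) (hn₀ : n ≠ 0)
    (h : Integrable (fun ω => f ω ^ n) μ) : MemLp f n μ := by
  rw [← integrable_norm_rpow_iff hf (by exact_mod_cast hn₀) (ENNReal.natCast_ne_top n)]
  simpa [Real.norm_eq_abs, hn.pow_abs] using h

lemma integral_norm_quadratic_pow_four_le {mΩ : MeasurableSpace Ω} {μ : Measure Ω}
    [IsProbabilityMeasure μ] (s : Finset ι) (a : E) (b : ι → E) {X : Ω → ℝ} {Y : ι → Ω → ℝ} {m : ℝ}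
    (hX : Integrable (fun ω => X ω ^ 8) μ) (hY : ∀ i ∈ s, Integrable (fun ω => Y i ω ^ 8) μ)
    (hXm : ∫ ω, X ω ^ 8 ∂μ = m) (hYm : ∀ i ∈ s, ∫ ω, Y i ω ^ 8 ∂μ = m) :
    ∫ ω, ‖(X ω ^ 2 - 1) • a + X ω • ∑ i ∈ s, Y i ω • b i‖ ^ 4 ∂μ ≤
      64 * ‖a‖ ^ 4 * (m + 1) + 16 * (∑ i ∈ s, ‖b i‖) ^ 4 * m := by
  set S := ∑ i ∈ s, ‖b i‖
  have hdiag : Integrable (fun ω => X ω ^ 8 + 1) μ := hX.add (integrable_const 1)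
  have hoff : ∀ i ∈ s, Integrable (fun ω => ‖b i‖ * (X ω ^ 8 + Y i ω ^ 8)) μ :=
    fun i hi => (hX.add (hY i hi)).const_mul _
  have hsum : Integrable (fun ω => ∑ i ∈ s, ‖b i‖ * (X ω ^ 8 + Y i ω ^ 8)) μ :=
    integrable_finsetSum _ hoff
  have hbound : ∫ ω, (64 * ‖a‖ ^ 4 * (X ω ^ 8 + 1) +
      8 * S ^ 3 * ∑ i ∈ s, ‖b i‖ * (X ω ^ 8 + Y i ω ^ 8)) ∂μ =
      64 * ‖a‖ ^ 4 * (m + 1) + 16 * S ^ 4 * m := by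
    rw [integral_add (hdiag.const_mul _) (hsum.const_mul _), integral_const_mul,
      integral_const_mul, integral_add hX (integrable_const 1), integral_finsetSum _ hoff, hXm,
      sum_congr rfl fun i hi => by
        rw [integral_const_mul, integral_add hX (hY i hi), hXm, hYm i hi],
      ← sum_mul]
    simp only [integral_const, probReal_univ, one_smul]
    ring
  refine (integral_mono_of_nonneg (.of_forall fun ω => by positivity)
    ((hdiag.const_mul _).add (hsum.const_mul _))
    (.of_forall fun ω => norm_quadratic_pow_four_le s a b (X ω) fun i => Y i ω)).trans_eq hbound

lemma condExp_smul_eq_zero_of_indep [CompleteSpace E] {m mX mΩ : MeasurableSpace Ω}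
    {μ : Measure Ω} [IsFiniteMeasure μ] (hm : m ≤ mΩ) (hmX : mX ≤ mΩ) (hind : Indep mX m μ)
    {f : Ω → ℝ} {g : Ω → E} (hf : StronglyMeasurable[mX] f) (hf_int : Integrable f μ)
    (hf₀ : μ[f] = 0) (hg : StronglyMeasurable[m] g) (hfg : Integrable (f • g) μ) :
    μ[f • g | m] =ᵐ[μ] 0 := by
  filter_upwards [condExp_smul_of_aestronglyMeasurable_right hf_int hfg hg.aestronglyMeasurable,
    condExp_indep_eq hmX hm hf hind] with ω hpull hindep
  simp [hpull, hindep, hf₀]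

theorem condExp_quadratic_innovation_eq_zero [CompleteSpace E] {m mΩ : MeasurableSpace Ω}
    {μ : Measure Ω} [IsProbabilityMeasure μ] (hm : m ≤ mΩ) {X : Ω → ℝ} (hX : Measurable X)
    (hind : Indep (.comap X inferInstance) m μ) (hX₂ : MemLp X 2 μ) (hmean : ∫ ω, X ω ∂μ = 0)
    (hvar : ∫ ω, X ω ^ 2 ∂μ = 1) (a : E) {Z : Ω → E} (hZ : StronglyMeasurable[m] Z)
    (hZ₂ : MemLp Z 2 μ) :
    μ[fun ω => (X ω ^ 2 - 1) • a + X ω • Z ω | m] =ᵐ[μ] 0 := by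
  have hX_comap : Measurable[.comap X inferInstance] X := comap_measurable X
  have hsq : Integrable (fun ω => X ω ^ 2 - 1) μ := hX₂.integrable_sq.sub (integrable_const 1)
  have hdiag_int : Integrable ((fun ω => X ω ^ 2 - 1) • fun _ => a) μ := hsq.smul_const a
  have hoff_int : Integrable (X • Z) μ := memLp_one_iff_integrable.1 (hZ₂.smul hX₂)
  have hdiag := condExp_smul_eq_zero_of_indep hm hX.comap_le hind
    ((hX_comap.pow_const 2).sub_const 1).stronglyMeasurable hsq
    (by rw [integral_sub hX₂.integrable_sq (integrable_const 1), hvar]; simp)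
    stronglyMeasurable_const hdiag_int
  have hoff := condExp_smul_eq_zero_of_indep hm hX.comap_le hind hX_comap.stronglyMeasurable
    (hX₂.integrable one_le_two) hmean hZ hoff_int
  have hsplit : (fun ω => (X ω ^ 2 - 1) • a + X ω • Z ω) =
      ((fun ω => X ω ^ 2 - 1) • fun _ => a) + X • Z := rfl
  filter_upwards [condExp_add hdiag_int hoff_int m, hdiag, hoff] with ω hadd h₁ h₂
  simpa [hsplit, h₁, h₂] using hadd

lemma exists_forall_integral_norm_quadratic_pow_four_le {mΩ : MeasurableSpace Ω}
    {μ : Measure Ω} [IsProbabilityMeasure μ] {ε : ℕ → Ω → ℝ}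
    (hident : ∀ t, IdentDistrib (ε t) (ε 0) μ μ) (hmom : ∀ t, Integrable (fun ω => ε t ω ^ 8) μ)
    (I : ℕ → Finset ℕ) {a : ℕ → ℕ → E} {b : ℕ → ℕ → ℕ → E} (ha : ∃ C, ∀ T s, ‖a T s‖ ≤ C)
    (hb : ∃ C, ∀ T s, ∑ i ∈ I s, ‖b T s i‖ ≤ C) :
    ∃ C, ∀ T s, ∫ ω, ‖(ε s ω ^ 2 - 1) • a T s + ε s ω • ∑ i ∈ I s, ε i ω • b T s i‖ ^ 4 ∂μ ≤ C := by
  obtain ⟨Ca, hCa⟩ := ha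
  obtain ⟨Cb, hCb⟩ := hb
  set m₈ := ∫ ω, ε 0 ω ^ 8 ∂μ
  have hm₈ : ∀ t, ∫ ω, ε t ω ^ 8 ∂μ = m₈ := fun t =>
    ((hident t).comp (measurable_id.pow_const 8)).integral_eq
  have hm₈_nonneg : 0 ≤ m₈ := integral_nonneg fun ω => by positivity
  refine ⟨64 * Ca ^ 4 * (m₈ + 1) + 16 * Cb ^ 4 * m₈, fun T s => ?_⟩
  refine (integral_norm_quadratic_pow_four_le _ _ _ (hmom s) (fun i _ => hmom i) (hm₈ s)
    (fun i _ => hm₈ i)).trans ?_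
  gcongr
  exacts [hCa T s, hCb T s]

end Probability

/-- With iid innovations (mean 0, variance 1, `E ε⁸ < ∞`) and deterministic
coefficients `A_T(s₁,s₂)` with uniform row/column absolute summability, the quantities
`M_T(s) = (ε_s² - 1)A_T(s,s) + ε_s ∑_{s₁<s} ε_{s₁}(A_T(s₁,s) + A_T(s,s₁))` form a martingale
difference sequence w.r.t. the natural filtration `F_s = σ(ε_s, ε_{s-1}, …)`, with
`sup_{s,T} E|M_T(s)|⁴ < ∞`. -/
theorem martingale_difference_structure
    {Ωs : Type*} [m0 : MeasurableSpace Ωs] (μ : Measure Ωs) [IsProbabilityMeasure μ]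
    (ε : ℕ → Ωs → ℝ) (hmeas : ∀ t, Measurable (ε t))
    (hindep : ProbabilityTheory.iIndepFun ε μ)
    (hident : ∀ s t, ProbabilityTheory.IdentDistrib (ε s) (ε t) μ μ)
    (hmean : ∀ t, ∫ ω, ε t ω ∂μ = 0)
    (hvar : ∀ t, ∫ ω, (ε t ω) ^ 2 ∂μ = 1)
    (hmom8 : ∀ t, Integrable (fun ω => (ε t ω) ^ 8) μ)
    (A : ℕ → ℕ → ℕ → ℂ)
    (hA1 : ∃ C : ℝ, ∀ T s, ∑ s₁ ∈ Finset.Icc 1 (s - 1), (‖A T s₁ s‖ + ‖A T s s₁‖) ≤ C)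
    (hA2 : ∃ C : ℝ, ∀ T s, ‖A T s s‖ ≤ C)
    (F : ℕ → MeasurableSpace Ωs)
    (hF : ∀ s, F s = ⨆ t ∈ Set.Iic s, MeasurableSpace.comap (ε t) inferInstance)
    (M : ℕ → ℕ → Ωs → ℂ)
    (hM : ∀ T s ω, M T s ω =
        (((ε s ω) ^ 2 - 1 : ℝ) : ℂ) * A T s s +
          ((ε s ω : ℝ) : ℂ) * ∑ s₁ ∈ Finset.Icc 1 (s - 1),
            ((ε s₁ ω : ℝ) : ℂ) * (A T s₁ s + A T s s₁)) :
    (∀ T s, Measurable[F s] (M T s)) ∧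
    (∀ T s, 1 ≤ s → μ[M T s | F (s - 1)] =ᵐ[μ] 0) ∧
    (∃ C : ℝ, ∀ T s, ∫ ω, ‖M T s ω‖ ^ 4 ∂μ ≤ C) := by
  have hsm : ∀ t, StronglyMeasurable (ε t) := fun t => (hmeas t).stronglyMeasurable
  -- `hF` is the definition of the natural filtration, unfolded
  obtain rfl : F = fun s => Filtration.natural ε hsm s := funext fun s => (hF s).trans rfl
  set 𝓕 := Filtration.natural ε hsm
  have hadapted : ∀ {t s}, t ≤ s → StronglyMeasurable[𝓕 s] (ε t) := fun hts =>
    (Filtration.stronglyAdapted_natural hsm _).mono (𝓕.mono hts)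
  have hL₂ : ∀ t, MemLp (ε t) 2 μ := fun t =>
    (memLp_of_integrable_pow_of_even (hsm t).aestronglyMeasurable (by decide) (by norm_num)
      (hmom8 t)).mono_exponent (by norm_num)
  set Z : ℕ → ℕ → Ωs → ℂ := fun T s ω => ∑ s₁ ∈ Icc 1 (s - 1), ε s₁ ω • (A T s₁ s + A T s s₁)
  have hM' : ∀ T s, M T s = fun ω => (ε s ω ^ 2 - 1) • A T s s + ε s ω • Z T s ω := fun T s =>
    funext fun ω => by simp only [hM, Z, Complex.real_smul, mul_sum]
  have hZ_meas : ∀ T s, StronglyMeasurable[𝓕 (s - 1)] (Z T s) := fun T s =>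
    Finset.stronglyMeasurable_fun_sum _ fun s₁ hs₁ =>
      (hadapted (mem_Icc.1 hs₁).2).smul_const _
  have hZ_memLp : ∀ T s, MemLp (Z T s) 2 μ := fun T s =>
    memLp_finsetSum _ fun s₁ _ => (memLp_top_const _).smul (hL₂ s₁)
  refine ⟨fun T s => ?_, fun T s hs => ?_, ?_⟩
  · rw [hM']
    have hε := (hadapted (le_refl s)).measurable
    exact (((hε.pow_const 2).sub_const 1).smul_const _).add
      (hε.smul ((hZ_meas T s).mono (𝓕.mono (Nat.sub_le s 1))).measurable)
  · rw [hM']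
    exact condExp_quadratic_innovation_eq_zero (𝓕.le _) (hmeas s)
      (hindep.indep_comap_natural_of_lt hsm (by omega)) (hL₂ s)
      (hmean s) (hvar s) _ (hZ_meas T s) (hZ_memLp T s)
  · obtain ⟨C₁, hC₁⟩ := hA1
    simp only [hM', Z]
    exact exists_forall_integral_norm_quadratic_pow_four_le (fun t => hident t 0) hmom8 _ hA2
      ⟨C₁, fun T s => (sum_le_sum fun _ _ => norm_add_le _ _).trans (hC₁ T s)⟩
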